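/- arXiv:0711.2762 — 2 statements merged into one kernel-verified Lean document; each statement's English description precedes it below -/
import Mathlib

section
/- Let (S_j)_{j=1}^n be i.i.d. finite random variables, and let Y^n be jointly distributed with X^n and S^n such that Y_j depends on (X_j, S_j) in a memoryless way (i.e., Y_j is conditionally independent of everything else given (X_j, S_j)). Then I(W1, S^n; Y^n | W2, X2^n, S2^n) − H(S^n|S2^n) ≤ Σ_{j=1}^n [ I(X_{1j}, S_{1j}; Y_j | X_{2j}, S_{2j}) − H(S_{1j} | S_{2j}) ], under the memoryless channel law and the Markov chain S_{1j} ↔ S_{2j} ↔ (S_1^{j−1}, S_2^{j−1}, S_{2,j+1}^n). -/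
open scoped BigOperators

set_option synthInstance.maxSize 2048

namespace IE

variable {Ω : Type*} [Fintype Ω]

/-- Probability that the random variable `X` takes the value `x`, under pmf `p`. -/
noncomputable def pr {α : Type*} [DecidableEq α] (p : Ω → ℝ) (X : Ω → α) (x : α) : ℝ :=
  ∑ ω : Ω, if X ω = x then p ω else 0

/-- Shannon entropy (base 2) of a random variable. -/
noncomputable def ent {α : Type*} [Fintype α] [DecidableEq α] (p : Ω → ℝ) (X : Ω → α) : ℝ :=
  -∑ x : α, pr p X x * Real.logb 2 (pr p X x)

/-- Conditional entropy H(X | Z). -/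
noncomputable def cent {α β : Type*} [Fintype α] [DecidableEq α] [Fintype β] [DecidableEq β]
    (p : Ω → ℝ) (X : Ω → α) (Z : Ω → β) : ℝ :=
  ent p (fun ω => (X ω, Z ω)) - ent p Z

/-- Mutual information I(X ; Y). -/
noncomputable def mi {α β : Type*} [Fintype α] [DecidableEq α] [Fintype β] [DecidableEq β]
    (p : Ω → ℝ) (X : Ω → α) (Y : Ω → β) : ℝ :=
  ent p X + ent p Y - ent p (fun ω => (X ω, Y ω))

/-- Conditional mutual information I(X ; Y | Z). -/
noncomputable def cmi {α β γ : Type*} [Fintype α] [DecidableEq α] [Fintype β] [DecidableEq β]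
    [Fintype γ] [DecidableEq γ] (p : Ω → ℝ) (X : Ω → α) (Y : Ω → β) (Z : Ω → γ) : ℝ :=
  ent p (fun ω => (X ω, Z ω)) + ent p (fun ω => (Y ω, Z ω))
    - ent p (fun ω => (X ω, Y ω, Z ω)) - ent p Z

/-- `p` is a probability mass function on `Ω`. -/
def IsPMF (p : Ω → ℝ) : Prop := (∀ ω, 0 ≤ p ω) ∧ ∑ ω : Ω, p ω = 1

/-!
Write `A = (W₁, S₁ⁿ)`, `C = (W₂, X₂ⁿ, S₂ⁿ)` and `E = (W₁, W₂, X₁ⁿ, S₁ⁿ, X₂ⁿ, S₂ⁿ)`, so that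
`I(A; Yⁿ | C) = H(Yⁿ | C) - H(Yⁿ | A, C)`. Since `(A, C)` is a function of `E`, conditioning
only lowers entropy and `H(Yⁿ | A, C) ≥ H(Yⁿ | E)`. Memorylessness makes the conditional law of `Yⁿ`
given `E` a product of letter kernels, the `j`-th depending on `E` only through
`(X₁ⱼ, S₁ⱼ, X₂ⱼ, S₂ⱼ)`; hence `H(Yⁿ | E) = ∑ⱼ H(Yⱼ | X₁ⱼ, S₁ⱼ, X₂ⱼ, S₂ⱼ)`. On the other side,
subadditivity and conditioning give `H(Yⁿ | C) ≤ ∑ⱼ H(Yⱼ | X₂ⱼ, S₂ⱼ)`. The same product-law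
argument applied to the i.i.d. states gives `H(S₁ⁿ | S₂ⁿ) = ∑ⱼ H(S₁ⱼ | S₂ⱼ)`.

That conditioning reduces entropy is the log-sum inequality, i.e. Jensen's inequality for the
concave function `x ↦ -x log x`, applied on each fiber of the coarser conditioning variable.
-/

open Real

section Probability

variable {α β ε : Type*} [DecidableEq α] [DecidableEq β] [DecidableEq ε]
variable {p : Ω → ℝ}

lemma sum_pr_mul [Fintype α] (X : Ω → α) (F : α → ℝ) :
    ∑ x, pr p X x * F x = ∑ ω, p ω * F (X ω) := by
  simp only [pr, Finset.sum_mul, ite_mul, zero_mul]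
  rw [Finset.sum_comm]
  simp

lemma pr_nonneg (hp : ∀ ω, 0 ≤ p ω) (X : Ω → α) (x : α) : 0 ≤ pr p X x :=
  Finset.sum_nonneg fun ω _ => by split <;> simp [hp ω]

lemma pr_comp [Fintype α] (X : Ω → α) (φ : α → β) (b : β) :
    pr p (fun ω => φ (X ω)) b = ∑ a with φ a = b, pr p X a := by
  rw [Finset.sum_filter, ← Finset.sum_congr rfl fun a _ => mul_boole (φ a = b) (pr p X a),
    sum_pr_mul]
  simp [pr]

lemma pr_comp_of_injective [Fintype α] (X : Ω → α) {φ : α → β} (hφ : Function.Injective φ)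
    (a : α) : pr p (fun ω => φ (X ω)) (φ a) = pr p X a := by
  simp [pr_comp, hφ.eq_iff, Finset.filter_eq']

lemma pr_pair_comp [Fintype β] [Fintype ε] {β' ε' : Type*} [DecidableEq β'] [DecidableEq ε']
    (Y : Ω → β) (E : Ω → ε) (φ : β → β') (ψ : ε → ε') (b : β') (a : ε') :
    pr p (fun ω => (φ (Y ω), ψ (E ω))) (b, a)
      = ∑ y with φ y = b, ∑ e with ψ e = a, pr p (fun ω => (Y ω, E ω)) (y, e) := by
  refine (pr_comp (fun ω => (Y ω, E ω)) (Prod.map φ ψ) (b, a)).trans ?_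
  rw [Finset.sum_filter, Fintype.sum_prod_type]
  simp [Finset.sum_filter, Prod.ext_iff, ite_and]

lemma pr_pair_comp_right [Fintype β] [Fintype ε] {ε' : Type*} [DecidableEq ε'] (Y : Ω → β)
    (E : Ω → ε) (g : ε → ε') (y : β) (a : ε') :
    pr p (fun ω => (Y ω, g (E ω))) (y, a)
      = ∑ e with g e = a, pr p (fun ω => (Y ω, E ω)) (y, e) := by
  simpa [Finset.filter_eq'] using pr_pair_comp (p := p) Y E id g y a

lemma sum_pr_pair_left [Fintype β] (Y : Ω → β) (E : Ω → ε) (e : ε) :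
    ∑ y, pr p (fun ω => (Y ω, E ω)) (y, e) = pr p E e := by
  unfold pr
  rw [Finset.sum_comm]
  simp [Prod.ext_iff, ite_and]

lemma pr_pair_le (hp : ∀ ω, 0 ≤ p ω) (Y : Ω → β) (E : Ω → ε) (y : β) (e : ε) :
    pr p (fun ω => (Y ω, E ω)) (y, e) ≤ pr p E e :=
  Finset.sum_le_sum fun ω _ => by
    by_cases h : E ω = e <;> split_ifs <;> simp_all

end Probability

section Entropy

variable {α β γ : Type*} [Fintype α] [DecidableEq α] [Fintype β] [DecidableEq β]
  [Fintype γ] [DecidableEq γ]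
variable {p : Ω → ℝ}

lemma ent_eq_sum (X : Ω → α) : ent p X = -∑ ω, p ω * logb 2 (pr p X (X ω)) := by
  rw [ent, sum_pr_mul X fun x => logb 2 (pr p X x)]

lemma mul_ent_eq (X : Ω → α) : log 2 * ent p X = ∑ x, negMulLog (pr p X x) := by
  rw [ent, mul_neg, Finset.mul_sum, ← Finset.sum_neg_distrib]
  refine Finset.sum_congr rfl fun x _ => ?_
  simp only [logb, negMulLog]
  field_simp

lemma ent_comp_of_injective (X : Ω → α) {φ : α → β} (hφ : Function.Injective φ) :
    ent p (fun ω => φ (X ω)) = ent p X := by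
  simp only [ent_eq_sum, pr_comp_of_injective X hφ]

lemma cent_comp_of_injective (X : Ω → α) {φ : α → β} (hφ : Function.Injective φ)
    (Z : Ω → γ) : cent p (fun ω => φ (X ω)) Z = cent p X Z := by
  rw [cent, cent, ← ent_comp_of_injective (fun ω => (X ω, Z ω))
    (hφ.prodMap Function.injective_id)]
  rfl

lemma cmi_eq_cent_sub_cent (X : Ω → α) (Y : Ω → β) (Z : Ω → γ) :
    cmi p X Y Z = cent p Y Z - cent p Y (fun ω => (X ω, Z ω)) := by
  have hswap : ent p (fun ω => (Y ω, X ω, Z ω)) = ent p (fun ω => (X ω, Y ω, Z ω)) :=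
    ent_comp_of_injective (fun ω => (X ω, Y ω, Z ω)) (φ := fun t => (t.2.1, t.1, t.2.2))
      fun s t h => by simp_all [Prod.ext_iff]
  rw [cmi, cent, cent, hswap]
  ring

lemma cent_pair_eq_add (X : Ω → α) (Y : Ω → β) (Z : Ω → γ) :
    cent p (fun ω => (X ω, Y ω)) Z = cent p X Z + cent p Y (fun ω => (X ω, Z ω)) := by
  have hassoc : ent p (fun ω => ((X ω, Y ω), Z ω)) = ent p (fun ω => (Y ω, X ω, Z ω)) :=
    ent_comp_of_injective (fun ω => (Y ω, X ω, Z ω)) (φ := fun t => ((t.2.1, t.1), t.2.2))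
      fun s t h => by simp_all [Prod.ext_iff]
  rw [cent, cent, cent, hassoc]
  ring

end Entropy

section CondLaw

variable {β ε η : Type*} [DecidableEq β] [DecidableEq ε] [DecidableEq η]
variable {p : Ω → ℝ}

/-- `M e` is a conditional law of `Y` given `E = e`; it is unconstrained where `pr p E e = 0`. -/
def IsCondLaw (p : Ω → ℝ) (Y : Ω → β) (E : Ω → ε) (M : ε → β → ℝ) : Prop :=
  ∀ y e, pr p (fun ω => (Y ω, E ω)) (y, e) = pr p E e * M e y

lemma isCondLaw_div (hp : ∀ ω, 0 ≤ p ω) (Y : Ω → β) (E : Ω → ε) :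
    IsCondLaw p Y E fun e y => pr p (fun ω => (Y ω, E ω)) (y, e) / pr p E e := by
  intro y e
  rcases eq_or_ne (pr p E e) 0 with he | he
  · rw [he, zero_mul]
    exact le_antisymm (he ▸ pr_pair_le hp Y E y e) (pr_nonneg hp _ _)
  · rw [mul_div_cancel₀ _ he]

namespace IsCondLaw

variable {Y : Ω → β} {E : Ω → ε} {M : ε → β → ℝ}

lemma sum_eq_one [Fintype β] (h : IsCondLaw p Y E M) {e : ε} (he : pr p E e ≠ 0) :
    ∑ y, M e y = 1 := by
  have := sum_pr_pair_left (p := p) Y E e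
  rw [Finset.sum_congr rfl fun y _ => h y e, ← Finset.mul_sum] at this
  exact (mul_eq_left₀ he).mp this

lemma mul_cent_eq [Fintype β] [Fintype ε] (h : IsCondLaw p Y E M) :
    log 2 * cent p Y E = ∑ e, pr p E e * ∑ y, negMulLog (M e y) := by
  have hrow : ∀ e, ∑ y, negMulLog (pr p (fun ω => (Y ω, E ω)) (y, e))
      = negMulLog (pr p E e) + pr p E e * ∑ y, negMulLog (M e y) := by
    intro e
    rcases eq_or_ne (pr p E e) 0 with he | he
    · simp [h _ e, he]
    · simp only [h _ e, negMulLog_mul, Finset.sum_add_distrib, ← Finset.sum_mul,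
        ← Finset.mul_sum, h.sum_eq_one he, one_mul]
  rw [cent, mul_sub, mul_ent_eq, mul_ent_eq, Fintype.sum_prod_type, Finset.sum_comm]
  simp only [hrow, Finset.sum_add_distrib]
  ring

lemma comp [Fintype β] [Fintype ε] {g : ε → η} {N : η → β → ℝ}
    (h : IsCondLaw p Y E fun e => N (g e)) : IsCondLaw p Y (fun ω => g (E ω)) N := by
  intro y a
  rw [pr_pair_comp_right, pr_comp, Finset.sum_mul]
  refine Finset.sum_congr rfl fun e he => ?_
  rw [h y e, ← (Finset.mem_filter.mp he).2]

end IsCondLaw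

lemma sum_pr_comp_mul [Fintype ε] [Fintype η] (E : Ω → ε) (g : ε → η) (F : η → ℝ) :
    ∑ a, pr p (fun ω => g (E ω)) a * F a = ∑ e, pr p E e * F (g e) := by
  rw [sum_pr_mul, sum_pr_mul E fun e => F (g e)]

lemma cent_eq_cent_comp_of_isCondLaw [Fintype β] [Fintype ε] [Fintype η] {Y : Ω → β}
    {E : Ω → ε} {g : ε → η} {M : η → β → ℝ}
    (h : IsCondLaw p Y E fun e => M (g e)) : cent p Y E = cent p Y (fun ω => g (E ω)) := by
  refine mul_left_cancel₀ (log_pos one_lt_two).ne' ?_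
  rw [h.mul_cent_eq, h.comp.mul_cent_eq, sum_pr_comp_mul E g fun a => ∑ y, negMulLog (M a y)]

end CondLaw

/-- The log-sum inequality. -/
lemma sum_mul_negMulLog_div_le {ι : Type*} (s : Finset ι) {u v : ι → ℝ}
    (hu : ∀ i ∈ s, 0 ≤ u i) (hv : ∀ i ∈ s, 0 ≤ v i) (huv : ∀ i ∈ s, u i = 0 → v i = 0) :
    ∑ i ∈ s, u i * negMulLog (v i / u i)
      ≤ (∑ i ∈ s, u i) * negMulLog ((∑ i ∈ s, v i) / ∑ i ∈ s, u i) := by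
  rcases (Finset.sum_nonneg hu).eq_or_lt with hU | hU
  · have hzero := (Finset.sum_eq_zero_iff_of_nonneg hu).mp hU.symm
    rw [← hU, zero_mul]
    exact (Finset.sum_eq_zero fun i hi => by rw [hzero i hi, zero_mul]).le
  set U := ∑ i ∈ s, u i
  have hjensen := concaveOn_negMulLog.le_map_sum (t := s) (w := fun i => u i / U)
    (p := fun i => v i / u i) (fun i hi => div_nonneg (hu i hi) hU.le)
    (by rw [← Finset.sum_div, div_self hU.ne']) (fun i hi => div_nonneg (hv i hi) (hu i hi))
  have hcancel : ∀ i ∈ s, u i / U * (v i / u i) = v i / U := fun i hi => by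
    rcases (hu i hi).eq_or_lt with h0 | h0
    · simp [← h0, huv i hi h0.symm]
    · field_simp
  simp only [smul_eq_mul, Finset.sum_congr rfl hcancel, ← Finset.sum_div] at hjensen
  rw [← div_le_iff₀' hU, Finset.sum_div]
  convert hjensen using 2 with i
  ring

section Conditioning

variable {α β γ ε η : Type*} [Fintype α] [DecidableEq α] [Fintype β] [DecidableEq β]
  [Fintype γ] [DecidableEq γ] [Fintype ε] [DecidableEq ε] [Fintype η] [DecidableEq η]
variable {p : Ω → ℝ}

lemma mul_cent_eq_sum_mul_negMulLog_div (hp : ∀ ω, 0 ≤ p ω) (Y : Ω → β) (E : Ω → ε) :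
    log 2 * cent p Y E
      = ∑ e, ∑ y, pr p E e * negMulLog (pr p (fun ω => (Y ω, E ω)) (y, e) / pr p E e) := by
  simp only [(isCondLaw_div hp Y E).mul_cent_eq, Finset.mul_sum]

lemma cent_le_cent_comp (hp : ∀ ω, 0 ≤ p ω) (Y : Ω → β) (E : Ω → ε) (g : ε → η) :
    cent p Y E ≤ cent p Y (fun ω => g (E ω)) := by
  refine le_of_mul_le_mul_left ?_ (log_pos one_lt_two)
  rw [mul_cent_eq_sum_mul_negMulLog_div hp, mul_cent_eq_sum_mul_negMulLog_div hp,
    ← Finset.sum_fiberwise Finset.univ g]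
  refine Finset.sum_le_sum fun a _ => ?_
  rw [Finset.sum_comm]
  refine Finset.sum_le_sum fun y _ => ?_
  rw [pr_comp, pr_pair_comp_right]
  exact sum_mul_negMulLog_div_le _ (fun e _ => pr_nonneg hp E e)
    (fun e _ => pr_nonneg hp _ (y, e))
    fun e _ he => le_antisymm (he ▸ pr_pair_le hp Y E y e) (pr_nonneg hp _ _)

lemma cent_pair_le (hp : ∀ ω, 0 ≤ p ω) (X : Ω → α) (Y : Ω → β) (Z : Ω → γ) :
    cent p (fun ω => (X ω, Y ω)) Z ≤ cent p X Z + cent p Y Z := by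
  rw [cent_pair_eq_add]
  exact add_le_add le_rfl (cent_le_cent_comp hp Y (fun ω => (X ω, Z ω)) Prod.snd)

lemma cent_tuple_le_sum (hp : ∀ ω, 0 ≤ p ω) {n : ℕ} (Y : Fin n → Ω → β) (Z : Ω → γ) :
    cent p (fun ω j => Y j ω) Z ≤ ∑ j, cent p (Y j) Z := by
  induction n with
  | zero =>
    have hent : ent p (fun ω => ((fun j : Fin 0 => Y j ω), Z ω)) = ent p Z := by
      have := ent_comp_of_injective (p := p) Z (φ := fun z => ((Fin.elim0 : Fin 0 → β), z))
        fun _ _ h => (Prod.ext_iff.mp h).2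
      convert this using 4
    rw [cent, hent, sub_self, Finset.univ_eq_empty, Finset.sum_empty]
  | succ n ih =>
    have hcons : cent p (fun ω j => Y j ω) Z
        = cent p (fun ω => (Y 0 ω, fun j : Fin n => Y j.succ ω)) Z := by
      rw [← cent_comp_of_injective _ (Fin.consEquiv fun _ => β).injective]
      congr 1
      funext ω
      exact (Fin.cons_self_tail _).symm
    rw [hcons, Fin.sum_univ_succ]
    exact (cent_pair_le hp _ _ Z).trans (add_le_add le_rfl (ih _))

end Conditioning

section Product

variable {β : Type*} [Fintype β] {n : ℕ}

lemma sum_prod_mul_apply (g : Fin n → β → ℝ) (h : β → ℝ) (j : Fin n) :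
    ∑ f : Fin n → β, (∏ i, g i (f i)) * h (f j)
      = (∑ z, g j z * h z) * ∏ i ∈ Finset.univ.erase j, ∑ z, g i z := by
  have hmul : ∀ f : Fin n → β,
      (∏ i, g i (f i)) * h (f j) = ∏ i, g i (f i) * if i = j then h (f i) else 1 := by
    intro f
    rw [Finset.prod_mul_distrib, Finset.prod_ite_eq' Finset.univ j fun i => h (f i)]
    simp
  simp only [hmul]
  rw [← Fintype.prod_sum (f := fun i z => g i z * if i = j then h z else 1),
    ← Finset.mul_prod_erase _ _ (Finset.mem_univ j)]
  congr 1
  · simp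
  · exact Finset.prod_congr rfl fun i hi => by simp [Finset.ne_of_mem_erase hi]

lemma negMulLog_prod {ι : Type*} (s : Finset ι) (x : ι → ℝ) :
    negMulLog (∏ i ∈ s, x i) = (∏ i ∈ s, x i) * ∑ i ∈ s, -log (x i) := by
  by_cases hx : ∀ i ∈ s, x i ≠ 0
  · rw [negMulLog, log_prod hx, Finset.sum_neg_distrib]
    ring
  · push Not at hx
    obtain ⟨i, hi, hxi⟩ := hx
    simp [Finset.prod_eq_zero hi hxi]

lemma sum_negMulLog_prod (g : Fin n → β → ℝ) (hg : ∀ j, ∑ z, g j z = 1) :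
    ∑ f : Fin n → β, negMulLog (∏ j, g j (f j)) = ∑ j, ∑ z, negMulLog (g j z) := by
  simp only [negMulLog_prod, Finset.mul_sum]
  rw [Finset.sum_comm]
  refine Finset.sum_congr rfl fun j _ => ?_
  rw [sum_prod_mul_apply g (fun z => -log (g j z)) j]
  simp [hg, negMulLog]

end Product

section Memoryless

variable {β ε η : Type*} [Fintype β] [DecidableEq β] [DecidableEq ε] [DecidableEq η]
variable {p : Ω → ℝ} {n : ℕ} {Y : Fin n → Ω → β} {E : Ω → ε}

lemma IsCondLaw.coord [Fintype ε] {M : Fin n → ε → β → ℝ}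
    (h : IsCondLaw p (fun ω j => Y j ω) E fun e f => ∏ j, M j e (f j))
    (hM : ∀ e, pr p E e ≠ 0 → ∀ j, ∑ y, M j e y = 1) (j : Fin n) :
    IsCondLaw p (Y j) E (M j) := by
  intro y e
  have hmarg : pr p (fun ω => (Y j ω, E ω)) (y, e)
      = pr p E e * ((∑ z, M j e z * if z = y then 1 else 0)
          * ∏ i ∈ Finset.univ.erase j, ∑ z, M i e z) := by
    rw [← sum_prod_mul_apply (fun i z => M i e z) (fun z => if z = y then 1 else 0) j,
      Finset.mul_sum]
    refine (pr_pair_comp (fun ω i => Y i ω) E (fun f => f j) id y e).trans ?_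
    simp only [id, Finset.filter_eq', Finset.mem_univ, if_true, Finset.sum_singleton, h _ e,
      Finset.sum_filter, mul_ite, mul_one, mul_zero]
  rcases eq_or_ne (pr p E e) 0 with he | he
  · rw [hmarg, he, zero_mul, zero_mul]
  · rw [hmarg, Finset.prod_congr rfl fun i _ => hM e he i]
    simp

lemma IsCondLaw.cent_tuple_eq_sum [Fintype ε] {M : Fin n → ε → β → ℝ}
    (h : IsCondLaw p (fun ω j => Y j ω) E fun e f => ∏ j, M j e (f j))
    (hM : ∀ e, pr p E e ≠ 0 → ∀ j, ∑ y, M j e y = 1) :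
    cent p (fun ω j => Y j ω) E = ∑ j, cent p (Y j) E := by
  refine mul_left_cancel₀ (log_pos one_lt_two).ne' ?_
  rw [h.mul_cent_eq, Finset.mul_sum]
  simp only [(h.coord hM _).mul_cent_eq]
  rw [Finset.sum_comm]
  refine Finset.sum_congr rfl fun e _ => ?_
  rcases eq_or_ne (pr p E e) 0 with he | he
  · simp [he]
  · rw [sum_negMulLog_prod _ (hM e he), Finset.mul_sum]

section ProductLaw

variable {w : ε → ℝ} {K : Fin n → ε → β → ℝ}

lemma pr_eq_mul_prod_sum
    (h : ∀ f e, pr p (fun ω => (fun j => Y j ω, E ω)) (f, e) = w e * ∏ j, K j e (f j))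
    (e : ε) : pr p E e = w e * ∏ j, ∑ y, K j e y := by
  rw [← sum_pr_pair_left (fun ω j => Y j ω) E e, Fintype.prod_sum, Finset.mul_sum]
  simp only [h]

lemma sum_div_sum_eq_one
    (h : ∀ f e, pr p (fun ω => (fun j => Y j ω, E ω)) (f, e) = w e * ∏ j, K j e (f j))
    {e : ε} (he : pr p E e ≠ 0) (j : Fin n) :
    ∑ y, K j e y / ∑ z, K j e z = 1 := by
  rw [pr_eq_mul_prod_sum h e] at he
  rw [← Finset.sum_div, div_self (Finset.prod_ne_zero_iff.mp (right_ne_zero_of_mul he) j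
    (Finset.mem_univ j))]

lemma isCondLaw_prod_div_sum (hp : ∀ ω, 0 ≤ p ω)
    (h : ∀ f e, pr p (fun ω => (fun j => Y j ω, E ω)) (f, e) = w e * ∏ j, K j e (f j)) :
    IsCondLaw p (fun ω j => Y j ω) E fun e f => ∏ j, K j e (f j) / ∑ z, K j e z := by
  intro f e
  dsimp only
  rw [Finset.prod_div_distrib]
  rcases eq_or_ne (∏ j, ∑ z, K j e z) 0 with h0 | h0
  · have he : pr p E e = 0 := by rw [pr_eq_mul_prod_sum h e, h0, mul_zero]
    rw [he, zero_mul]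
    exact le_antisymm (he ▸ pr_pair_le hp _ E f e) (pr_nonneg hp _ _)
  · rw [h f e, pr_eq_mul_prod_sum h e]
    field_simp

end ProductLaw

theorem cent_tuple_eq_sum_of_memoryless [Fintype ε] [Fintype η] (hp : ∀ ω, 0 ≤ p ω)
    (g : Fin n → ε → η) (w : ε → ℝ) (K : Fin n → η → β → ℝ)
    (h : ∀ f e, pr p (fun ω => (fun j => Y j ω, E ω)) (f, e) = w e * ∏ j, K j (g j e) (f j)) :
    cent p (fun ω j => Y j ω) E = ∑ j, cent p (Y j) fun ω => g j (E ω) := by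
  have hM := fun e (he : pr p E e ≠ 0) => sum_div_sum_eq_one h he
  have hlaw := isCondLaw_prod_div_sum hp h
  rw [hlaw.cent_tuple_eq_sum hM]
  exact Finset.sum_congr rfl fun j _ => cent_eq_cent_comp_of_isCondLaw
    (M := fun a y => K j a y / ∑ z, K j a z) (hlaw.coord hM j)

theorem cent_tuple_eq_sum_of_indep_pairs [Fintype ε] (hp : ∀ ω, 0 ≤ p ω) (Z : Fin n → Ω → ε)
    (q : Fin n → β × ε → ℝ)
    (hq : ∀ f : Fin n → β × ε, pr p (fun ω j => (Y j ω, Z j ω)) f = ∏ j, q j (f j)) :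
    cent p (fun ω j => Y j ω) (fun ω j => Z j ω) = ∑ j, cent p (Y j) (Z j) := by
  refine cent_tuple_eq_sum_of_memoryless (Y := Y) (E := fun ω j => Z j ω) hp
    (fun j (z : Fin n → ε) => z j) 1 (fun j z y => q j (y, z)) fun f z => ?_
  rw [Pi.one_apply, one_mul, ← hq]
  exact pr_comp_of_injective (fun ω j => (Y j ω, Z j ω))
    (Equiv.arrowProdEquivProdArrow (Fin n) (fun _ => β) (fun _ => ε)).injective
    fun j => (f j, z j)

end Memoryless

theorem mac_converse_single_letter_general
    {Ω 𝒲₁ 𝒲₂ 𝒮₁ 𝒮₂ 𝒳₁ 𝒳₂ 𝒴 : Type*} [Fintype Ω]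
    [Fintype 𝒲₁] [DecidableEq 𝒲₁] [Fintype 𝒲₂] [DecidableEq 𝒲₂]
    [Fintype 𝒮₁] [DecidableEq 𝒮₁] [Fintype 𝒮₂] [DecidableEq 𝒮₂]
    [Fintype 𝒳₁] [DecidableEq 𝒳₁] [Fintype 𝒳₂] [DecidableEq 𝒳₂]
    [Fintype 𝒴] [DecidableEq 𝒴]
    (p : Ω → ℝ) (hp : IsPMF p) (n : ℕ)
    (W1 : Ω → 𝒲₁) (W2 : Ω → 𝒲₂)
    (S1 : Fin n → Ω → 𝒮₁) (S2 : Fin n → Ω → 𝒮₂)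
    (X1 : Fin n → Ω → 𝒳₁) (X2 : Fin n → Ω → 𝒳₂) (Y : Fin n → Ω → 𝒴)
    (hiid : ∃ q : 𝒮₁ × 𝒮₂ → ℝ, ∀ f : Fin n → 𝒮₁ × 𝒮₂,
      pr p (fun ω => fun j => (S1 j ω, S2 j ω)) f = ∏ j, q (f j))
    (hmem : ∃ ch : 𝒴 → 𝒳₁ × 𝒮₁ × 𝒳₂ × 𝒮₂ → ℝ,
      ∀ (w1 : 𝒲₁) (w2 : 𝒲₂) (x1 : Fin n → 𝒳₁) (s1 : Fin n → 𝒮₁)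
        (x2 : Fin n → 𝒳₂) (s2 : Fin n → 𝒮₂) (y : Fin n → 𝒴),
        pr p (fun ω => (W1 ω, W2 ω, (fun j => X1 j ω), (fun j => S1 j ω),
            (fun j => X2 j ω), (fun j => S2 j ω), (fun j => Y j ω)))
          (w1, w2, x1, s1, x2, s2, y)
        = pr p (fun ω => (W1 ω, W2 ω, (fun j => X1 j ω), (fun j => S1 j ω),
            (fun j => X2 j ω), (fun j => S2 j ω))) (w1, w2, x1, s1, x2, s2)
            * ∏ j, ch (y j) (x1 j, s1 j, x2 j, s2 j)) :
    cmi p (fun ω => (W1 ω, fun j => S1 j ω)) (fun ω => fun j => Y j ω)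
        (fun ω => (W2 ω, (fun j => X2 j ω), (fun j => S2 j ω)))
      - cent p (fun ω => fun j => S1 j ω) (fun ω => fun j => S2 j ω)
    ≤ ∑ j : Fin n,
        (cmi p (fun ω => (X1 j ω, S1 j ω)) (Y j) (fun ω => (X2 j ω, S2 j ω))
          - cent p (S1 j) (S2 j)) := by
  obtain ⟨q, hq⟩ := hiid
  obtain ⟨ch, hch⟩ := hmem
  set E := fun ω => (W1 ω, W2 ω, (fun j => X1 j ω), (fun j => S1 j ω),
    (fun j => X2 j ω), (fun j => S2 j ω))
  set C := fun ω => (W2 ω, (fun j => X2 j ω), (fun j => S2 j ω))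
  have hchannel : cent p (fun ω j => Y j ω) E
      = ∑ j, cent p (Y j) fun ω => ((X1 j ω, S1 j ω), (X2 j ω, S2 j ω)) := by
    refine cent_tuple_eq_sum_of_memoryless (Y := Y) (E := E) hp.1
      (fun j e => ((e.2.2.1 j, e.2.2.2.1 j), (e.2.2.2.2.1 j, e.2.2.2.2.2 j))) (pr p E)
      (fun _ a y => ch y (a.1.1, a.1.2, a.2.1, a.2.2)) ?_
    rintro f ⟨w1, w2, x1, s1, x2, s2⟩
    have hφ : Function.Injective fun t : 𝒲₁ × 𝒲₂ × (Fin n → 𝒳₁) × (Fin n → 𝒮₁) ×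
        (Fin n → 𝒳₂) × (Fin n → 𝒮₂) × (Fin n → 𝒴) =>
        (t.2.2.2.2.2.2, t.1, t.2.1, t.2.2.1, t.2.2.2.1, t.2.2.2.2.1, t.2.2.2.2.2.1) :=
      fun s t h => by simp_all [Prod.ext_iff]
    exact (pr_comp_of_injective _ hφ _).trans (hch w1 w2 x1 s1 x2 s2 f)
  have hE : cent p (fun ω j => Y j ω) E
      ≤ cent p (fun ω j => Y j ω) fun ω => ((W1 ω, fun j => S1 j ω), C ω) :=
    cent_le_cent_comp hp.1 _ E fun e => ((e.1, e.2.2.2.1), (e.2.1, e.2.2.2.2.1, e.2.2.2.2.2))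
  have hC : cent p (fun ω j => Y j ω) C ≤ ∑ j, cent p (Y j) C := cent_tuple_le_sum hp.1 Y C
  have hCj : ∀ j, cent p (Y j) C ≤ cent p (Y j) fun ω => (X2 j ω, S2 j ω) := fun j =>
    cent_le_cent_comp hp.1 (Y j) C fun c => (c.2.1 j, c.2.2 j)
  have hstate := cent_tuple_eq_sum_of_indep_pairs (Y := S1) hp.1 S2 (fun _ => q) hq
  simp only [cmi_eq_cent_sub_cent, Finset.sum_sub_distrib]
  linarith [Finset.sum_le_sum fun j (_ : j ∈ Finset.univ) => hCj j]

/-- single-letterization step of the MAC converse: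
I(W1,S1^n;Y^n|W2,X2^n,S2^n) − H(S1^n|S2^n)
  ≤ Σ_j [ I(X1j,S1j;Yj|X2j,S2j) − H(S1j|S2j) ]. -/
theorem mac_converse_single_letter
    {Ω 𝒲₁ 𝒲₂ 𝒮₁ 𝒮₂ 𝒳₁ 𝒳₂ 𝒴 : Type*} [Fintype Ω]
    [Fintype 𝒲₁] [DecidableEq 𝒲₁] [Fintype 𝒲₂] [DecidableEq 𝒲₂]
    [Fintype 𝒮₁] [DecidableEq 𝒮₁] [Fintype 𝒮₂] [DecidableEq 𝒮₂]
    [Fintype 𝒳₁] [DecidableEq 𝒳₁] [Fintype 𝒳₂] [DecidableEq 𝒳₂]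
    [Fintype 𝒴] [DecidableEq 𝒴]
    (p : Ω → ℝ) (hp : IsPMF p) (n : ℕ)
    (W1 : Ω → 𝒲₁) (W2 : Ω → 𝒲₂)
    (S1 : Fin n → Ω → 𝒮₁) (S2 : Fin n → Ω → 𝒮₂)
    (X1 : Fin n → Ω → 𝒳₁) (X2 : Fin n → Ω → 𝒳₂) (Y : Fin n → Ω → 𝒴)
    (hiid : ∃ q : 𝒮₁ × 𝒮₂ → ℝ, ∀ f : Fin n → 𝒮₁ × 𝒮₂,
      pr p (fun ω => fun j => (S1 j ω, S2 j ω)) f = ∏ j, q (f j))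
    (henc1 : ∃ f1 : 𝒲₁ → (Fin n → 𝒮₁) → Fin n → 𝒳₁,
      ∀ ω j, X1 j ω = f1 (W1 ω) (fun i => S1 i ω) j)
    (henc2 : ∃ f2 : 𝒲₂ → (Fin n → 𝒮₂) → Fin n → 𝒳₂,
      ∀ ω j, X2 j ω = f2 (W2 ω) (fun i => S2 i ω) j)
    (hmem : ∃ ch : 𝒴 → 𝒳₁ × 𝒮₁ × 𝒳₂ × 𝒮₂ → ℝ,
      ∀ (w1 : 𝒲₁) (w2 : 𝒲₂) (x1 : Fin n → 𝒳₁) (s1 : Fin n → 𝒮₁)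
        (x2 : Fin n → 𝒳₂) (s2 : Fin n → 𝒮₂) (y : Fin n → 𝒴),
        pr p (fun ω => (W1 ω, W2 ω, (fun j => X1 j ω), (fun j => S1 j ω),
            (fun j => X2 j ω), (fun j => S2 j ω), (fun j => Y j ω)))
          (w1, w2, x1, s1, x2, s2, y)
        = pr p (fun ω => (W1 ω, W2 ω, (fun j => X1 j ω), (fun j => S1 j ω),
            (fun j => X2 j ω), (fun j => S2 j ω))) (w1, w2, x1, s1, x2, s2)
            * ∏ j, ch (y j) (x1 j, s1 j, x2 j, s2 j)) :
    cmi p (fun ω => (W1 ω, fun j => S1 j ω)) (fun ω => fun j => Y j ω)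
        (fun ω => (W2 ω, (fun j => X2 j ω), (fun j => S2 j ω)))
      - cent p (fun ω => fun j => S1 j ω) (fun ω => fun j => S2 j ω)
    ≤ ∑ j : Fin n,
        (cmi p (fun ω => (X1 j ω, S1 j ω)) (Y j) (fun ω => (X2 j ω, S2 j ω))
          - cent p (S1 j) (S2 j)) :=
  mac_converse_single_letter_general p hp n W1 W2 S1 S2 X1 X2 Y hiid hmem
end IE
end

section
/- Csiszár sum identity: for any jointly distributed finite random sequences Z^n and S^n and any random variable W, Σ_{j=1}^n I(S_{j+1}^n ; Z_j | W, Z^{j−1}) = Σ_{j=1}^n I(Z^{j−1} ; S_j | W, S_{j+1}^n). -/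
open scoped BigOperators

set_option synthInstance.maxSize 2048

namespace IE

variable {Ω : Type*} [Fintype Ω]

/-!
Write `E a b` for the entropy of `(W, Z_i for i < a, S_i for i ≥ b)` (indices from `0`). Since an
entropy only depends on the partition of `Ω` a variable induces, each conditional mutual
information in the identity is a signed sum of four values of `E`: the `j`-th term on the left is
`E j (j+1) + E (j+1) n - E (j+1) (j+1) - E j n` and on the right
`E j (j+1) + E 0 j - E j j - E 0 (j+1)`. After cancelling the common `E j (j+1)`, what is left on
each side telescopes along a row, a column or the diagonal of `E`, and the three boundary values
`E 0 0`, `E 0 n`, `E n n` cancel.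
-/

theorem ent_eq_sum_logb_pr {α : Type*} [Fintype α] [DecidableEq α] (p : Ω → ℝ) (X : Ω → α) :
    ent p X = -∑ ω, p ω * Real.logb 2 (pr p X (X ω)) := by
  unfold ent
  congr 1
  simp only [pr, Finset.sum_mul, ite_mul, zero_mul]
  rw [Finset.sum_comm]
  simp

theorem pr_apply_congr {α β : Type*} [DecidableEq α] [DecidableEq β] (p : Ω → ℝ)
    {X : Ω → α} {Y : Ω → β} (h : ∀ ω ω', X ω = X ω' ↔ Y ω = Y ω') (ω : Ω) :
    pr p X (X ω) = pr p Y (Y ω) := by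
  simp only [pr, h]

theorem ent_congr {α β : Type*} [Fintype α] [DecidableEq α] [Fintype β] [DecidableEq β]
    (p : Ω → ℝ) {X : Ω → α} {Y : Ω → β} (h : ∀ ω ω', X ω = X ω' ↔ Y ω = Y ω') :
    ent p X = ent p Y := by
  simp only [ent_eq_sum_logb_pr, pr_apply_congr p h]

theorem cmi_eq_of_ent_eq {α β γ : Type*} [Fintype α] [DecidableEq α] [Fintype β] [DecidableEq β]
    [Fintype γ] [DecidableEq γ] (p : Ω → ℝ) {X : Ω → α} {Y : Ω → β} {Z : Ω → γ} {a b c d : ℝ}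
    (hxz : ent p (fun ω => (X ω, Z ω)) = a) (hyz : ent p (fun ω => (Y ω, Z ω)) = b)
    (hxyz : ent p (fun ω => (X ω, Y ω, Z ω)) = c) (hz : ent p Z = d) :
    cmi p X Y Z = a + b - c - d := by
  rw [cmi, hxz, hyz, hxyz, hz]

theorem sum_fin_telescope {G : Type*} [AddCommGroup G] (E : ℕ → ℕ → G) (n : ℕ) :
    ∑ j : Fin n, (E j (j + 1) + E (j + 1) n - E (j + 1) (j + 1) - E j n)
      = ∑ j : Fin n, (E j (j + 1) + E 0 j - E j j - E 0 (j + 1)) := by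
  rw [Fin.sum_univ_eq_sum_range (fun j => E j (j + 1) + E (j + 1) n - E (j + 1) (j + 1) - E j n),
    Fin.sum_univ_eq_sum_range (fun j => E j (j + 1) + E 0 j - E j j - E 0 (j + 1)),
    ← sub_eq_zero, ← Finset.sum_sub_distrib]
  have hsplit : ∀ j, E j (j + 1) + E (j + 1) n - E (j + 1) (j + 1) - E j n
      - (E j (j + 1) + E 0 j - E j j - E 0 (j + 1))
      = (E (j + 1) n - E j n) - (E (j + 1) (j + 1) - E j j) + (E 0 (j + 1) - E 0 j) := by
    intro j; abel
  simp only [hsplit, Finset.sum_add_distrib, Finset.sum_sub_distrib (f := fun j => E (j + 1) n - E j n),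
    Finset.sum_range_sub (fun k => E k n), Finset.sum_range_sub (fun k => E k k),
    Finset.sum_range_sub (fun k => E 0 k)]
  abel

section Csiszar

variable {𝒲 𝒮 𝒵 : Type*} {n : ℕ} (W : Ω → 𝒲) (S : Fin n → Ω → 𝒮) (Z : Fin n → Ω → 𝒵)

/-- In the paper's `1`-indexed notation, `prefixSuffix W S Z a b` is `(W, Z^a, S_{b+1}^n)`. -/
def prefixSuffix (a b : ℕ) (ω : Ω) :
    𝒲 × ({i : Fin n // (i : ℕ) < a} → 𝒵) × ({i : Fin n // b ≤ (i : ℕ)} → 𝒮) :=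
  (W ω, fun i => Z i.1 ω, fun i => S i.1 ω)

variable [Fintype 𝒲] [DecidableEq 𝒲] [Fintype 𝒮] [DecidableEq 𝒮] [Fintype 𝒵] [DecidableEq 𝒵]

theorem cmi_suffix_current_eq_ent (p : Ω → ℝ) (j : Fin n) :
    cmi p (fun ω => fun i : {i : Fin n // j < i} => S i.1 ω) (Z j)
        (fun ω => (W ω, fun i : {i : Fin n // i < j} => Z i.1 ω))
      = ent p (prefixSuffix W S Z j (j + 1)) + ent p (prefixSuffix W S Z (j + 1) n)
        - ent p (prefixSuffix W S Z (j + 1) (j + 1)) - ent p (prefixSuffix W S Z j n) := by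
  refine cmi_eq_of_ent_eq p ?_ ?_ ?_ ?_ <;> apply ent_congr <;> intro ω ω' <;>
    simp only [prefixSuffix, Prod.mk.injEq, funext_iff, Subtype.forall, Order.add_one_le_iff,
      Order.lt_add_one_iff, Fin.val_fin_lt, Fin.val_fin_le, (Fin.is_lt _).not_ge,
      le_iff_lt_or_eq (α := Fin n), or_imp, forall_and, forall_eq, IsEmpty.forall_iff]
  all_goals tauto

theorem cmi_prefix_current_eq_ent (p : Ω → ℝ) (j : Fin n) :
    cmi p (fun ω => fun i : {i : Fin n // i < j} => Z i.1 ω) (S j)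
        (fun ω => (W ω, fun i : {i : Fin n // j < i} => S i.1 ω))
      = ent p (prefixSuffix W S Z j (j + 1)) + ent p (prefixSuffix W S Z 0 j)
        - ent p (prefixSuffix W S Z j j) - ent p (prefixSuffix W S Z 0 (j + 1)) := by
  refine cmi_eq_of_ent_eq p ?_ ?_ ?_ ?_ <;> apply ent_congr <;> intro ω ω' <;>
    simp only [prefixSuffix, Prod.mk.injEq, funext_iff, Subtype.forall, Order.add_one_le_iff,
      Fin.val_fin_lt, Fin.val_fin_le, not_lt_zero, le_iff_lt_or_eq (α := Fin n), or_imp,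
      forall_and, forall_eq', IsEmpty.forall_iff]
  all_goals tauto

end Csiszar

theorem csiszar_sum_general
    {Ω 𝒲 𝒮 𝒵 : Type*} [Fintype Ω]
    [Fintype 𝒲] [DecidableEq 𝒲] [Fintype 𝒮] [DecidableEq 𝒮]
    [Fintype 𝒵] [DecidableEq 𝒵]
    (p : Ω → ℝ) (n : ℕ)
    (W : Ω → 𝒲) (S : Fin n → Ω → 𝒮) (Z : Fin n → Ω → 𝒵) :
    ∑ j : Fin n,
        cmi p (fun ω => fun i : {i : Fin n // j < i} => S i.1 ω) (Z j)
          (fun ω => (W ω, fun i : {i : Fin n // i < j} => Z i.1 ω))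
      = ∑ j : Fin n,
        cmi p (fun ω => fun i : {i : Fin n // i < j} => Z i.1 ω) (S j)
          (fun ω => (W ω, fun i : {i : Fin n // j < i} => S i.1 ω)) := by
  simp only [cmi_suffix_current_eq_ent, cmi_prefix_current_eq_ent]
  exact sum_fin_telescope (fun a b => ent p (prefixSuffix W S Z a b)) n

/-- the Csiszár sum identity. -/
theorem csiszar_sum
    {Ω 𝒲 𝒮 𝒵 : Type*} [Fintype Ω]
    [Fintype 𝒲] [DecidableEq 𝒲] [Fintype 𝒮] [DecidableEq 𝒮]
    [Fintype 𝒵] [DecidableEq 𝒵]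
    (p : Ω → ℝ) (hp : IsPMF p) (n : ℕ)
    (W : Ω → 𝒲) (S : Fin n → Ω → 𝒮) (Z : Fin n → Ω → 𝒵) :
    ∑ j : Fin n,
        cmi p (fun ω => fun i : {i : Fin n // j < i} => S i.1 ω) (Z j)
          (fun ω => (W ω, fun i : {i : Fin n // i < j} => Z i.1 ω))
      = ∑ j : Fin n,
        cmi p (fun ω => fun i : {i : Fin n // i < j} => Z i.1 ω) (S j)
          (fun ω => (W ω, fun i : {i : Fin n // j < i} => S i.1 ω)) :=
  csiszar_sum_general p n W S Z
end IE
end
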